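/- arXiv:2601.07619 — 4 statements merged into one kernel-verified Lean document; each statement's English description precedes it below -/
import Mathlib

section
/- Let φ:ℝ→[0,1] be nonnegative and x_d ∈ ℝ. Suppose x = (x_1,…,x_N) ∈ ℝ^N satisfies, for all i, (1/N)∑_{j=1}^N φ(x_j − x_i)(x_j − x_i) + x_d − x_i = 0. Then x_i = x_d for all i. In other words, the consensus state at x_d is the unique critical point of the controlled HK vector field with control u_i = x_d − x_i. -/
/-- The consensus state at `x_d` is the unique critical point of the controlled
HK vector field with control `u_i = x_d - x_i`. -/
theorem stmt2 (N : ℕ) (hN : 0 < N) (φ : ℝ → ℝ) (hφ : ∀ r, 0 ≤ φ r) (hφ1 : ∀ r, φ r ≤ 1)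
    (xd : ℝ) (x : Fin N → ℝ)
    (hcrit : ∀ i, (1 / (N : ℝ)) * ∑ j, φ (x j - x i) * (x j - x i) + (xd - x i) = 0) :
    ∀ i, x i = xd := by
  have : Nonempty (Fin N) := ⟨⟨0, hN⟩⟩
  obtain ⟨im, _, hmin⟩ := Finset.exists_min_image Finset.univ x ⟨⟨0, hN⟩, Finset.mem_univ _⟩
  obtain ⟨iM, _, hmax⟩ := Finset.exists_max_image Finset.univ x ⟨⟨0, hN⟩, Finset.mem_univ _⟩
  have hNpos : (0:ℝ) < N := by exact_mod_cast hN
  have h1 : xd ≤ x im := by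
    have hsum : 0 ≤ ∑ j, φ (x j - x im) * (x j - x im) :=
      Finset.sum_nonneg fun j _ => mul_nonneg (hφ _) (sub_nonneg.2 (hmin j (Finset.mem_univ j)))
    have := hcrit im
    nlinarith [mul_nonneg (le_of_lt (one_div_pos.2 hNpos)) hsum]
  have h2 : x iM ≤ xd := by
    have hsum : ∑ j, φ (x j - x iM) * (x j - x iM) ≤ 0 :=
      Finset.sum_nonpos fun j _ =>
        mul_nonpos_of_nonneg_of_nonpos (hφ _) (sub_nonpos.2 (hmax j (Finset.mem_univ j)))
    have := hcrit iM
    nlinarith [mul_nonpos_of_nonneg_of_nonpos (le_of_lt (one_div_pos.2 hNpos)) hsum]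
  intro i
  have := hmin i (Finset.mem_univ i)
  have := hmax i (Finset.mem_univ i)
  linarith
end

section
/- Let φ:[0,2]→[0,1] be decreasing with r* = inf{r : φ(r) = 0} (r* = 2 if φ has no root). Consider N agents ordered x_1(0) ≤ x_2(0) ≤ … ≤ x_N(0) evolving under ẋ_i = (1/d_i)∑_j w_{ij}(t) φ(|x_j − x_i|)(x_j − x_i) with arbitrary nonnegative weights w_{ij}(t). If there exists an index i such that x_{i+1}(0) − x_i(0) > r*, then the population never reaches consensus: for all t, x_{i'}(t) and x_{j'}(t) remain separated by more than r* for agents starting below and above the gap, respectively. -/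
open Filter Set Topology

open Classical in
/-- If `φ` is decreasing with first root `r*` and two consecutive ordered initial
opinions are separated by more than `r*`, then agents on opposite sides of the gap
remain separated by more than `r*` for all time, and the population never reaches
consensus. -/
theorem stmt5 (N : ℕ) (hN : 0 < N) (φ : ℝ → ℝ)
    (hφrange : ∀ r, φ r ∈ Set.Icc (0 : ℝ) 1)
    (hφdec : AntitoneOn φ (Set.Icc (0 : ℝ) 2))
    (rstar : ℝ)
    (hrstar : rstar = if {r ∈ Set.Icc (0 : ℝ) 2 | φ r = 0} = ∅ then 2
      else sInf {r ∈ Set.Icc (0 : ℝ) 2 | φ r = 0})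
    (hroots : ∀ r : ℝ, rstar ≤ r → φ r = 0)
    (w : ℝ → Fin N → Fin N → ℝ) (hw : ∀ t i j, 0 ≤ w t i j)
    (d : ℝ → Fin N → ℝ) (hd : ∀ t i, d t i = ∑ j, w t i j) (hdpos : ∀ t i, 0 < d t i)
    (x : ℝ → Fin N → ℝ)
    (hode : ∀ t : ℝ, 0 ≤ t → ∀ i, HasDerivAt (fun s => x s i)
      ((1 / d t i) * ∑ j, w t i j * φ (|x t j - x t i|) * (x t j - x t i)) t)
    (hordered : ∀ k l : Fin N, k ≤ l → x 0 k ≤ x 0 l)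
    (i : Fin N) (hgap : ∃ isucc : Fin N, i < isucc ∧
      (∀ k : Fin N, i < k → isucc ≤ k) ∧ rstar < x 0 isucc - x 0 i) :
    (∀ t : ℝ, 0 ≤ t → ∀ i' j' : Fin N, i' ≤ i → i < j' → rstar < x t j' - x t i') ∧
    ¬ ∃ c : ℝ, ∀ k : Fin N, Filter.Tendsto (fun t => x t k) Filter.atTop (nhds c) := by
  obtain ⟨isucc, hii, hik, hgapv⟩ := hgap
  have hrstar0 : (0:ℝ) ≤ rstar := by
    rw [hrstar]; split_ifs with hre
    · norm_num
    · exact le_csInf (Set.nonempty_iff_ne_empty.2 hre) (fun r hr => hr.1.1)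
  set m0 := x 0 i with hm0
  set M0 := x 0 isucc with hM0
  set δ := (M0 - m0 - rstar) / 2 with hδdef
  have hδpos : 0 < δ := by rw [hδdef]; linarith
  set h : Option (Fin N) → ℝ → ℝ :=
    fun o t => Option.elim o 0 (fun k => if k ≤ i then x t k - m0 else M0 - x t k) with hhdef
  have hneu : (Finset.univ : Finset (Option (Fin N))).Nonempty := ⟨none, Finset.mem_univ _⟩
  set f : ℝ → ℝ := fun t => Finset.univ.sup' hneu (fun o => h o t) with hfdef
  have hle : ∀ t o, h o t ≤ f t := by
    intro t o
    rw [hfdef]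
    exact Finset.le_sup' (fun o => h o t) (Finset.mem_univ o)
  have hlow : ∀ t (k : Fin N), k ≤ i → x t k - m0 ≤ f t := by
    intro t k hk; simpa [hhdef, hk] using hle t (some k)
  have hhigh : ∀ t (k : Fin N), ¬ k ≤ i → M0 - x t k ≤ f t := by
    intro t k hk; simpa [hhdef, hk] using hle t (some k)
  have hfnn : ∀ t, (0:ℝ) ≤ f t := fun t => by simpa [hhdef] using hle t none
  -- continuity
  have hcx : ∀ (k : Fin N), ContinuousOn (fun t => x t k) (Ici 0) :=
    fun k t ht => ((hode t ht k).continuousAt).continuousWithinAt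
  have hch : ∀ o : Option (Fin N), ContinuousOn (h o) (Ici 0) := by
    intro o
    rcases o with _ | k
    · simp only [hhdef, Option.elim]; exact continuousOn_const
    · by_cases hk : k ≤ i
      · simp only [hhdef, Option.elim, if_pos hk]
        exact (hcx k).sub continuousOn_const
      · simp only [hhdef, Option.elim, if_neg hk]
        exact continuousOn_const.sub (hcx k)
  have hcf : ContinuousOn f (Ici 0) := by
    intro t ht
    exact Filter.Tendsto.finset_sup'_nhds_apply hneu
      (fun o _ => (hch o t ht))
  -- key derivative and sign lemma
  have hkey : ∀ s : ℝ, 0 ≤ s → ∀ o : Option (Fin N),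
      ∃ dv : ℝ, HasDerivAt (h o) dv s ∧ (f s < δ → h o s = f s → dv ≤ 0) := by
    intro s hs o
    rcases o with _ | k
    · refine ⟨0, ?_, fun _ _ => le_refl 0⟩
      simp only [hhdef, Option.elim]
      exact hasDerivAt_const s 0
    · by_cases hk : k ≤ i
      · refine ⟨(1 / d s k) * ∑ j, w s k j * φ (|x s j - x s k|) * (x s j - x s k), ?_, ?_⟩
        · have H := (hode s hs k).sub_const m0
          simp only [hhdef, Option.elim, if_pos hk]
          exact H
        · intro hfs hach
          have hach' : x s k - m0 = f s := by simpa [hhdef, Option.elim, if_pos hk] using hach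
          have hsum : ∑ j, w s k j * φ (|x s j - x s k|) * (x s j - x s k) ≤ 0 := by
            apply Finset.sum_nonpos
            intro j _
            by_cases hj : j ≤ i
            · have h1 : x s j - m0 ≤ f s := hlow s j hj
              have h2 : x s j - x s k ≤ 0 := by linarith
              exact mul_nonpos_iff.2 (Or.inl ⟨mul_nonneg (hw s k j) (hφrange _).1, h2⟩)
            · have h1 : M0 - x s j ≤ f s := hhigh s j hj
              have hgt : rstar < x s j - x s k := by
                rw [hδdef] at hfs; linarith
              have hφ0 : φ (|x s j - x s k|) = 0 :=
                hroots _ (le_trans hgt.le (le_abs_self _))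
              simp [hφ0]
          have hdn : (0:ℝ) ≤ 1 / d s k := le_of_lt (one_div_pos.2 (hdpos s k))
          exact mul_nonpos_iff.2 (Or.inl ⟨hdn, hsum⟩)
      · refine ⟨-((1 / d s k) * ∑ j, w s k j * φ (|x s j - x s k|) * (x s j - x s k)), ?_, ?_⟩
        · have H := (hode s hs k).const_sub M0
          simp only [hhdef, Option.elim, if_neg hk]
          exact H
        · intro hfs hach
          have hach' : M0 - x s k = f s := by simpa [hhdef, Option.elim, if_neg hk] using hach
          rw [neg_nonpos]
          have hsum : (0:ℝ) ≤ ∑ j, w s k j * φ (|x s j - x s k|) * (x s j - x s k) := by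
            apply Finset.sum_nonneg
            intro j _
            by_cases hj : j ≤ i
            · have h1 : x s j - m0 ≤ f s := hlow s j hj
              have hgt : rstar < x s k - x s j := by
                rw [hδdef] at hfs; linarith
              have habs : rstar ≤ |x s j - x s k| := by
                have : rstar ≤ -(x s j - x s k) := by linarith
                exact le_trans this (neg_le_abs _)
              have hφ0 : φ (|x s j - x s k|) = 0 := hroots _ habs
              simp [hφ0]
            · have h1 : M0 - x s j ≤ f s := hhigh s j hj
              have h2 : (0:ℝ) ≤ x s j - x s k := by linarith
              exact mul_nonneg (mul_nonneg (hw s k j) (hφrange _).1) h2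
          exact mul_nonneg (le_of_lt (one_div_pos.2 (hdpos s k))) hsum
  -- initial condition
  have hinitial : ∀ o : Option (Fin N), h o 0 ≤ 0 := by
    intro o
    rcases o with _ | k
    · simp [hhdef]
    · by_cases hk : k ≤ i
      · have := hordered k i hk
        simp only [hhdef, Option.elim, if_pos hk, hm0]
        linarith
      · have hik' : isucc ≤ k := hik k (not_le.1 hk)
        have := hordered isucc k hik'
        simp only [hhdef, Option.elim, if_neg hk, hM0]
        linarith
  have hf00 : f 0 ≤ 0 := Finset.sup'_le _ _ (fun o _ => hinitial o)
  -- invariance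
  have hinv : ∀ T : ℝ, 0 ≤ T → f T ≤ 0 := by
    by_contra hcon
    push_neg at hcon
    obtain ⟨T, hT0, hfT⟩ := hcon
    set S := {s : ℝ | s ∈ Icc 0 T ∧ 0 < f s} with hSdef
    have hTS : T ∈ S := ⟨⟨hT0, le_refl T⟩, hfT⟩
    have hSne : S.Nonempty := ⟨T, hTS⟩
    have hSbd : BddBelow S := ⟨0, fun s hs => hs.1.1⟩
    set t₀ := sInf S with ht₀def
    have ht₀0 : 0 ≤ t₀ := le_csInf hSne (fun s hs => hs.1.1)
    have ht₀T : t₀ ≤ T := csInf_le hSbd hTS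
    have hbelow : ∀ s : ℝ, 0 ≤ s → s < t₀ → f s ≤ 0 := by
      intro s hs0 hst
      by_contra hpos
      push_neg at hpos
      exact absurd (csInf_le hSbd ⟨⟨hs0, hst.le.trans ht₀T⟩, hpos⟩) (not_le.2 hst)
    have hft₀ : f t₀ ≤ 0 := by
      rcases eq_or_lt_of_le ht₀0 with heq | hlt
      · rw [← heq]; exact hf00
      · have hnb : (𝓝[Ioo 0 t₀] t₀).NeBot := right_nhdsWithin_Ioo_neBot hlt
        have htend : Tendsto f (𝓝[Ioo 0 t₀] t₀) (𝓝 (f t₀)) :=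
          (hcf t₀ ht₀0).mono_left (nhdsWithin_mono _ (fun z hz => le_of_lt hz.1))
        exact le_of_tendsto htend (eventually_mem_nhdsWithin.mono
          (fun z hz => hbelow z hz.1.le hz.2))
    have ht₀T' : t₀ < T := by
      rcases eq_or_lt_of_le ht₀T with heq | hlt
      · exfalso; rw [heq] at hft₀; linarith
      · exact hlt
    -- find a small interval beyond t₀ where f < δ
    have hcwa : Tendsto f (𝓝[Ici 0] t₀) (𝓝 (f t₀)) := hcf t₀ ht₀0
    have hmem : f ⁻¹' (Iio δ) ∈ 𝓝[Ici 0] t₀ := hcwa (Iio_mem_nhds (lt_of_le_of_lt hft₀ hδpos))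
    rw [Metric.mem_nhdsWithin_iff] at hmem
    obtain ⟨ε, hε, hball⟩ := hmem
    set b := min T (t₀ + ε / 2) with hbdef
    have ht₀b : t₀ < b := lt_min ht₀T' (by linarith)
    have hbsmall : ∀ s ∈ Icc t₀ b, f s < δ := by
      intro s hs
      have hs0 : (0:ℝ) ≤ s := le_trans ht₀0 hs.1
      have hdist : dist s t₀ < ε := by
        rw [Real.dist_eq, abs_of_nonneg (by linarith [hs.1])]
        have : s ≤ t₀ + ε / 2 := le_trans hs.2 (min_le_right _ _)
        linarith
      exact hball ⟨Metric.mem_ball.2 hdist, hs0⟩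
    -- Gronwall on [t₀, b]
    have hgron : ∀ s ∈ Icc t₀ b, f s ≤ gronwallBound 0 0 0 (s - t₀) := by
      apply le_gronwallBound_of_liminf_deriv_right_le
        (f' := fun _ => (0:ℝ))
      · exact hcf.mono (fun s hs => le_trans ht₀0 hs.1)
      · intro s hs r hr
        have hs0 : (0:ℝ) ≤ s := le_trans ht₀0 hs.1
        have hfsδ : f s < δ := hbsmall s ⟨hs.1, hs.2.le⟩
        have hev : ∀ o : Option (Fin N), ∀ᶠ z in 𝓝[>] s, h o z < f s + r * (z - s) := by
          intro o
          obtain ⟨dv, hdv, hsign⟩ := hkey s hs0 o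
          rcases eq_or_lt_of_le (hle s o) with hach | hlt
          · -- achiever
            have hdr : dv < r := lt_of_le_of_lt (hsign hfsδ hach) hr
            have hslope := hasDerivAt_iff_tendsto_slope.1 hdv
            have hev1 : ∀ᶠ z in 𝓝[≠] s, slope (h o) s z < r :=
              hslope.eventually_lt_const hdr
            have hev2 : ∀ᶠ z in 𝓝[>] s, slope (h o) s z < r :=
              hev1.filter_mono (nhdsWithin_mono _ (fun z hz => ne_of_gt hz))
            filter_upwards [hev2, eventually_mem_nhdsWithin] with z hz hz'
            have hzs : (0:ℝ) < z - s := sub_pos.2 hz'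
            rw [slope_def_field, div_lt_iff₀ hzs] at hz
            have : h o z - h o s < r * (z - s) := by linarith [hz]
            linarith [hach.le, hach.ge, this]
          · -- non-achiever : continuity
            have hct : Tendsto (fun z => h o z - r * (z - s)) (𝓝 s) (𝓝 (h o s)) := by
              have h1 : Tendsto (h o) (𝓝 s) (𝓝 (h o s)) := hdv.continuousAt.tendsto
              have h2 : Tendsto (fun z : ℝ => r * (z - s)) (𝓝 s) (𝓝 (r * (s - s))) :=
                (tendsto_const_nhds.mul ((continuous_id.sub continuous_const).tendsto s))
              simpa using h1.sub h2
            have := (hct.eventually_lt_const hlt).filter_mono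
              (nhdsWithin_le_nhds (s := Ioi s))
            exact this.mono (fun z hz => by linarith [hz])
        have hall : ∀ᶠ z in 𝓝[>] s, ∀ o, h o z < f s + r * (z - s) := eventually_all.2 hev
        apply Filter.Eventually.frequently
        filter_upwards [hall, eventually_mem_nhdsWithin] with z hz hz'
        have hzs : (0:ℝ) < z - s := sub_pos.2 hz'
        have hfz : f z < f s + r * (z - s) := by
          have h2 : Finset.univ.sup' hneu (fun o => h o z) < f s + r * (z - s) :=
            (Finset.sup'_lt_iff hneu).2 (fun o _ => hz o)
          rw [hfdef]
          exact h2
        calc (z - s)⁻¹ * (f z - f s) < (z - s)⁻¹ * (r * (z - s)) := by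
              apply mul_lt_mul_of_pos_left _ (inv_pos.2 hzs)
              linarith
          _ = r := by field_simp
      · exact hft₀
      · intro s hs; simp
    -- contradiction: b is a lower bound of S
    have hblb : ∀ s ∈ S, b ≤ s := by
      intro s hs
      by_contra hbs
      push_neg at hbs
      have hst₀ : t₀ ≤ s := csInf_le hSbd hs
      have := hgron s ⟨hst₀, hbs.le⟩
      rw [gronwallBound_ε0_δ0] at this
      linarith [hs.2]
    have : b ≤ t₀ := le_csInf hSne hblb
    linarith
  -- conclusions
  constructor
  · intro t ht i' j' hi' hj'
    have h1 : x t i' ≤ m0 := by linarith [hlow t i' hi', hinv t ht]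
    have h2 : M0 ≤ x t j' := by linarith [hhigh t j' (not_le.2 hj'), hinv t ht]
    linarith
  · rintro ⟨c, hc⟩
    have hlim : Tendsto (fun t => x t isucc - x t i) atTop (𝓝 0) := by
      simpa using (hc isucc).sub (hc i)
    have hev : ∀ᶠ t in atTop, M0 - m0 ≤ x t isucc - x t i := by
      filter_upwards [eventually_ge_atTop (0:ℝ)] with t ht
      have h1 : x t i ≤ m0 := by linarith [hlow t i (le_refl i), hinv t ht]
      have h2 : M0 ≤ x t isucc := by linarith [hhigh t isucc (not_le.2 hii), hinv t ht]
      linarith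
    have : M0 - m0 ≤ 0 := ge_of_tendsto hlim hev
    linarith
end

section
/- In population protocol 1 for exact majority (rules (A_Y, A_N) → (P_N, P_N) and (A_α, P_β) → (A_α, P_α)), if initially every agent is active and #A_Y > #A_N, then in every reachable configuration the number of active-Yes agents exceeds the number of active-No agents; in particular at least one agent in state A_Y persists forever, and any terminal configuration in which no transition changes the configuration has all passive agents holding opinion Y and no agent in state A_N. -/
/-- States of population protocol 1 for exact majority: active/passive, opinion Y/N. -/
inductive St : Type
  | AY | AN | PY | PN
  deriving DecidableEq

/-- The pairwise transition rules of protocol 1: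
`(A_Y, A_N) → (P_N, P_N)` and `(A_α, P_β) → (A_α, P_α)`; all other pairs unchanged. -/
def ruleFn : St × St → St × St
  | (St.AY, St.AN) => (St.PN, St.PN)
  | (St.AN, St.AY) => (St.PN, St.PN)
  | (St.AY, St.PY) => (St.AY, St.PY)
  | (St.AY, St.PN) => (St.AY, St.PY)
  | (St.AN, St.PY) => (St.AN, St.PN)
  | (St.AN, St.PN) => (St.AN, St.PN)
  | (St.PY, St.AY) => (St.PY, St.AY)
  | (St.PN, St.AY) => (St.PY, St.AY)
  | (St.PY, St.AN) => (St.PN, St.AN)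
  | (St.PN, St.AN) => (St.PN, St.AN)
  | (p, q) => (p, q)

/-- Number of agents in state `s` in configuration `C`. -/
def countSt {n : ℕ} (C : Fin n → St) (s : St) : ℕ :=
  (Finset.univ.filter (fun i => C i = s)).card

/-- One transition of the protocol: some pair of distinct agents interacts. -/
def protoStep {n : ℕ} (C C' : Fin n → St) : Prop :=
  ∃ i j : Fin n, i ≠ j ∧
    C' = Function.update (Function.update C i (ruleFn (C i, C j)).1) j
      (ruleFn (C i, C j)).2


def opVal : St → ℤ
  | St.AY => 1
  | St.AN => -1
  | _ => 0

def F {n : ℕ} (C : Fin n → St) : ℤ := ∑ k, opVal (C k)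

lemma opVal_eq (x : St) :
    opVal x = (if x = St.AY then (1:ℤ) else 0) - (if x = St.AN then 1 else 0) := by
  cases x <;> decide

lemma F_eq {n : ℕ} (C : Fin n → St) : F C = (countSt C St.AY : ℤ) - countSt C St.AN := by
  simp only [F, opVal_eq, Finset.sum_sub_distrib, Finset.sum_boole, countSt]

lemma F_update {n : ℕ} (g : Fin n → St) (j : Fin n) (b : St) :
    F (Function.update g j b) = F g + opVal b - opVal (g j) := by
  classical
  have hc : (fun k => opVal (Function.update g j b k)) =
      Function.update (fun k => opVal (g k)) j (opVal b) :=
    funext fun k => Function.apply_update (fun _ => opVal) g j b k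
  rw [F, hc, Finset.sum_update_of_mem (Finset.mem_univ j), F,
    Finset.sdiff_singleton_eq_erase, Finset.sum_erase_eq_sub (Finset.mem_univ j)]
  ring

lemma rule_val (x y : St) :
    opVal (ruleFn (x, y)).1 + opVal (ruleFn (x, y)).2 = opVal x + opVal y := by
  cases x <;> cases y <;> decide

lemma F_step {n : ℕ} {C C' : Fin n → St} (h : protoStep C C') : F C' = F C := by
  obtain ⟨i, j, hij, rfl⟩ := h
  rw [F_update, F_update, Function.update_of_ne (Ne.symm hij)]
  have := rule_val (C i) (C j)
  linarith

/-- If initially every agent is active and `#A_Y > #A_N`, then in every reachable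
configuration `#A_Y > #A_N`, in particular some agent in state `A_Y` persists, and
in any terminal configuration there is no agent in state `A_N` and every passive
agent holds opinion Y (i.e. no agent is in state `P_N`). -/
theorem stmt11 (n : ℕ) (C0 : Fin n → St)
    (hactive : ∀ i, C0 i = St.AY ∨ C0 i = St.AN)
    (hmaj : countSt C0 St.AN < countSt C0 St.AY) :
    ∀ C : Fin n → St, Relation.ReflTransGen protoStep C0 C →
      (countSt C St.AN < countSt C St.AY ∧
       (∃ i, C i = St.AY) ∧
       ((∀ i j : Fin n, i ≠ j → ruleFn (C i, C j) = (C i, C j)) →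
         ∀ i, C i ≠ St.AN ∧ C i ≠ St.PN)) := by
  intro C hreach
  have hF : F C = F C0 := by
    induction hreach with
    | refl => rfl
    | tail _ hstep ih => rw [F_step hstep, ih]
  have hinv : countSt C St.AN < countSt C St.AY := by
    have h0 : (countSt C0 St.AN : ℤ) < countSt C0 St.AY := by exact_mod_cast hmaj
    have := F_eq C; have := F_eq C0
    have : (countSt C St.AN : ℤ) < countSt C St.AY := by omega
    exact_mod_cast this
  have hex : ∃ i, C i = St.AY := by
    have hpos : 0 < countSt C St.AY := Nat.lt_of_le_of_lt (Nat.zero_le _) hinv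
    rw [countSt, Finset.card_pos] at hpos
    obtain ⟨i, hi⟩ := hpos
    exact ⟨i, (Finset.mem_filter.mp hi).2⟩
  refine ⟨hinv, hex, ?_⟩
  intro hterm i
  obtain ⟨j, hj⟩ := hex
  constructor
  · intro hi
    have hij : j ≠ i := fun h => by rw [h, hi] at hj; exact St.noConfusion hj
    have := hterm j i hij
    rw [hj, hi] at this
    exact absurd this (by decide)
  · intro hi
    have hij : j ≠ i := fun h => by rw [h, hi] at hj; exact St.noConfusion hj
    have := hterm j i hij
    rw [hj, hi] at this
    exact absurd this (by decide)
end

section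
/- Let W ∈ ℝ^{N×N} be a symmetric nonnegative matrix (an undirected weighted network) with graph Laplacian 𝓛 = D − W, where D = diag(d_i), d_i = ∑_j w_{ij}. Let W₀ and W₁ be diagonal matrices with nonnegative diagonal entries w_{0i}, w_{1i}, and suppose for every i, w_{0i} + w_{1i} > 0 or the graph is connected with some w_{0j} + w_{1j} > 0. Then the matrix 𝓛 + W₀ + W₁ is positive definite, hence invertible, and the steady-state vector p_* = (𝓛 + W₀ + W₁)^{-1} w₀ (with w₀ the vector of entries w_{0i}) satisfies 0 ≤ p_{*,i} ≤ 1 for all i. -/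
open Matrix

/-!
Let `L = diag(W 𝟙) - W + diag c` with `W ≥ 0` symmetric and `c ≥ 0`. Its quadratic form is
`½ ∑ᵢⱼ wᵢⱼ (xᵢ - xⱼ)² + ∑ᵢ cᵢ xᵢ²`, so `L` is positive semidefinite. A discrete maximum
principle shows `L v ≥ 0 → v ≥ 0` as soon as every vertex is joined by a path of positive
weights to a vertex with `cⱼ > 0`: at a negative minimum of `v` every neighbour must share the
minimum, which then reaches a vertex where `cⱼ vⱼ < 0` forces `(L v)ⱼ < 0`. Hence `L` is
injective, so positive definite, and `p = L⁻¹ w₀` satisfies `L p = w₀ ≥ 0` and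
`L (𝟙 - p) = c - w₀ = w₁ ≥ 0` for `c = w₀ + w₁`.
-/

open Finset

def groundedLaplacian {n R : Type*} [Fintype n] [DecidableEq n] [CommRing R]
    (W : Matrix n n R) (c : n → R) : Matrix n n R :=
  diagonal (fun i => ∑ j, W i j) - W + diagonal c

def IsGrounded {n R : Type*} [Zero R] [LT R] (W : Matrix n n R) (c : n → R) : Prop :=
  ∀ i, ∃ j, Relation.ReflTransGen (fun a b => 0 < W a b) i j ∧ 0 < c j

theorem isGrounded_of_forall_pos_or_connected {n R : Type*} [Zero R] [LT R]
    {W : Matrix n n R} {c : n → R}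
    (h : (∀ i, 0 < c i) ∨
      ((∀ i j, Relation.ReflTransGen (fun a b => 0 < W a b) i j) ∧ ∃ j, 0 < c j)) :
    IsGrounded W c := by
  rcases h with hpos | ⟨hconn, j, hj⟩
  · exact fun i => ⟨i, .refl, hpos i⟩
  · exact fun i => ⟨j, hconn i j, hj⟩

section

variable {n R : Type*} [Fintype n]

section CommRing

variable [DecidableEq n] [CommRing R] {W : Matrix n n R} {c : n → R}

theorem groundedLaplacian_mulVec_apply (x : n → R) (i : n) :
    (groundedLaplacian W c *ᵥ x) i = ∑ j, W i j * (x i - x j) + c i * x i := by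
  rw [groundedLaplacian, add_mulVec, sub_mulVec, Pi.add_apply, Pi.sub_apply, mulVec_diagonal,
    mulVec_diagonal, mulVec, dotProduct, sum_mul]
  simp only [mul_sub, sum_sub_distrib]

theorem groundedLaplacian_mulVec_one : groundedLaplacian W c *ᵥ 1 = c := by
  ext i
  simp [groundedLaplacian_mulVec_apply]

theorem isSymm_groundedLaplacian (hW : W.IsSymm) : (groundedLaplacian W c).IsSymm :=
  ((isSymm_diagonal _).sub hW).add (isSymm_diagonal c)

theorem two_mul_dotProduct_groundedLaplacian_mulVec (hW : W.IsSymm) (x : n → R) :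
    2 * (x ⬝ᵥ (groundedLaplacian W c *ᵥ x)) =
      ∑ i, ∑ j, W i j * (x i - x j) ^ 2 + 2 * ∑ i, c i * x i ^ 2 := by
  -- swapping `i` and `j` turns the `x j`-half of `(xᵢ - xⱼ)²` into minus the `x i`-half
  have hswap : ∑ i, ∑ j, W i j * (x i - x j) * x j = -∑ i, ∑ j, W i j * (x i - x j) * x i := by
    rw [sum_comm, ← sum_neg_distrib]
    refine sum_congr rfl fun i _ => ?_
    rw [← sum_neg_distrib]
    refine sum_congr rfl fun j _ => ?_
    rw [hW.apply]
    ring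
  have hsq : ∑ i, ∑ j, W i j * (x i - x j) ^ 2 =
      ∑ i, ∑ j, W i j * (x i - x j) * x i - ∑ i, ∑ j, W i j * (x i - x j) * x j := by
    simp only [← sum_sub_distrib]
    exact sum_congr rfl fun i _ => sum_congr rfl fun j _ => by ring
  have hdot : x ⬝ᵥ (groundedLaplacian W c *ᵥ x) =
      ∑ i, ∑ j, W i j * (x i - x j) * x i + ∑ i, c i * x i ^ 2 := by
    simp only [dotProduct, groundedLaplacian_mulVec_apply, ← sum_add_distrib]
    refine sum_congr rfl fun i _ => ?_
    rw [mul_add, mul_sum]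
    congr 1
    · exact sum_congr rfl fun j _ => by ring
    · ring
  rw [hdot, hsq, hswap]
  ring

end CommRing

section OrderedField

variable [Field R] [LinearOrder R] [IsStrictOrderedRing R] {W : Matrix n n R} {c : n → R}

theorem sum_mul_sub_nonpos_of_forall_le (hW : ∀ i j, 0 ≤ W i j) {v : n → R} {a : n}
    (hmin : ∀ j, v a ≤ v j) : ∑ j, W a j * (v a - v j) ≤ 0 :=
  sum_nonpos fun j _ => mul_nonpos_of_nonneg_of_nonpos (hW a j) (sub_nonpos.2 (hmin j))

variable [DecidableEq n]

theorem apply_eq_of_forall_le_of_groundedLaplacian_mulVec_nonneg (hW : ∀ i j, 0 ≤ W i j)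
    (hc : 0 ≤ c) {v : n → R} {a b : n} (hmin : ∀ j, v a ≤ v j) (ha : v a ≤ 0)
    (hLv : 0 ≤ (groundedLaplacian W c *ᵥ v) a) (hab : 0 < W a b) : v b = v a := by
  rw [groundedLaplacian_mulVec_apply] at hLv
  have hterm : ∀ j ∈ univ, W a j * (v a - v j) ≤ 0 := fun j _ =>
    mul_nonpos_of_nonneg_of_nonpos (hW a j) (sub_nonpos.2 (hmin j))
  have hsum : ∑ j, W a j * (v a - v j) = 0 :=
    le_antisymm (sum_nonpos hterm) (by nlinarith [mul_nonpos_of_nonneg_of_nonpos (hc a) ha])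
  have hb := (mul_eq_zero.1 ((sum_eq_zero_iff_of_nonpos hterm).1 hsum b (mem_univ b))).resolve_left
    hab.ne'
  linarith

theorem nonneg_of_groundedLaplacian_mulVec_nonneg (hW : ∀ i j, 0 ≤ W i j) (hc : 0 ≤ c)
    (hg : IsGrounded W c) {v : n → R} (hv : 0 ≤ groundedLaplacian W c *ᵥ v) : 0 ≤ v := by
  intro i
  by_contra! hneg
  obtain ⟨a, -, hmin⟩ := exists_min_image univ v ⟨i, mem_univ i⟩
  replace hmin : ∀ j, v a ≤ v j := fun j => hmin j (mem_univ j)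
  have ha : v a < 0 := (hmin i).trans_lt hneg
  obtain ⟨j, hpath, hcj⟩ := hg a
  have hj : v j = v a := by
    clear hcj
    induction hpath with
    | refl => rfl
    | tail _ hbc ih =>
      exact (apply_eq_of_forall_le_of_groundedLaplacian_mulVec_nonneg hW hc (ih ▸ hmin)
        (ih ▸ ha.le) (hv _) hbc).trans ih
  have hLv := hv j
  rw [Pi.zero_apply, groundedLaplacian_mulVec_apply] at hLv
  have := sum_mul_sub_nonpos_of_forall_le hW (hj ▸ hmin)
  have := mul_neg_of_pos_of_neg hcj (hj ▸ ha)
  linarith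

theorem groundedLaplacian_mulVec_injective (hW : ∀ i j, 0 ≤ W i j) (hc : 0 ≤ c)
    (hg : IsGrounded W c) : Function.Injective (groundedLaplacian W c *ᵥ ·) := by
  intro u v huv
  have h : groundedLaplacian W c *ᵥ (u - v) = 0 := by rw [mulVec_sub]; exact sub_eq_zero.2 huv
  have huv := nonneg_of_groundedLaplacian_mulVec_nonneg hW hc hg h.ge
  have hvu := nonneg_of_groundedLaplacian_mulVec_nonneg hW hc hg (v := v - u)
    (by rw [← neg_sub, mulVec_neg, h, neg_zero])
  exact le_antisymm (sub_nonneg.1 hvu) (sub_nonneg.1 huv)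

end OrderedField

variable [DecidableEq n] {W : Matrix n n ℝ} {c : n → ℝ}

theorem posSemidef_groundedLaplacian (hsymm : W.IsSymm) (hW : ∀ i j, 0 ≤ W i j) (hc : 0 ≤ c) :
    (groundedLaplacian W c).PosSemidef := by
  refine .of_dotProduct_mulVec_nonneg (isHermitian_iff_isSymm.2 (isSymm_groundedLaplacian hsymm))
    fun x => ?_
  have hq := two_mul_dotProduct_groundedLaplacian_mulVec (c := c) hsymm x
  have hedges : 0 ≤ ∑ i, ∑ j, W i j * (x i - x j) ^ 2 :=
    sum_nonneg fun i _ => sum_nonneg fun j _ => mul_nonneg (hW i j) (sq_nonneg _)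
  have hground : 0 ≤ ∑ i, c i * x i ^ 2 := sum_nonneg fun i _ => mul_nonneg (hc i) (sq_nonneg _)
  rw [star_trivial]
  linarith

theorem posDef_groundedLaplacian (hsymm : W.IsSymm) (hW : ∀ i j, 0 ≤ W i j) (hc : 0 ≤ c)
    (hg : IsGrounded W c) : (groundedLaplacian W c).PosDef :=
  (posSemidef_groundedLaplacian hsymm hW hc).posDef_iff_isUnit.2
    (mulVec_injective_iff_isUnit.1 (groundedLaplacian_mulVec_injective hW hc hg))

end

/-- The matrix `𝓛 + W₀ + W₁` (graph Laplacian plus nonnegative diagonal controller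
couplings, with the stated positivity/connectivity condition) is positive definite,
hence invertible, and the steady state `p_* = (𝓛 + W₀ + W₁)⁻¹ w₀` has all entries
in `[0, 1]`. -/
theorem stmt16 (N : ℕ) (W : Matrix (Fin N) (Fin N) ℝ)
    (hsymm : W.IsSymm) (hnonneg : ∀ i j, 0 ≤ W i j)
    (w0 w1 : Fin N → ℝ) (h0 : ∀ i, 0 ≤ w0 i) (h1 : ∀ i, 0 ≤ w1 i)
    (hcond : (∀ i, 0 < w0 i + w1 i) ∨
      ((∀ i j : Fin N, Relation.ReflTransGen (fun a b => 0 < W a b) i j) ∧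
        ∃ j, 0 < w0 j + w1 j)) :
    (Matrix.diagonal (fun i => ∑ j, W i j) - W
        + Matrix.diagonal w0 + Matrix.diagonal w1).PosDef ∧
    IsUnit (Matrix.diagonal (fun i => ∑ j, W i j) - W
        + Matrix.diagonal w0 + Matrix.diagonal w1) ∧
    ∀ i, ((Matrix.diagonal (fun i => ∑ j, W i j) - W
        + Matrix.diagonal w0 + Matrix.diagonal w1)⁻¹ *ᵥ w0) i ∈ Set.Icc (0 : ℝ) 1 := by
  have hL : diagonal (fun i => ∑ j, W i j) - W + diagonal w0 + diagonal w1 =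
      groundedLaplacian W (w0 + w1) := by
    rw [groundedLaplacian, add_assoc, diagonal_add]
    rfl
  have hc : 0 ≤ w0 + w1 := fun i => add_nonneg (h0 i) (h1 i)
  have hg := isGrounded_of_forall_pos_or_connected hcond
  have hpd := posDef_groundedLaplacian hsymm hnonneg hc hg
  rw [hL]
  refine ⟨hpd, hpd.isUnit, fun i => ?_⟩
  set p := (groundedLaplacian W (w0 + w1))⁻¹ *ᵥ w0
  have hp : groundedLaplacian W (w0 + w1) *ᵥ p = w0 := by
    rw [mulVec_mulVec, mul_nonsing_inv _ ((isUnit_iff_isUnit_det _).1 hpd.isUnit), one_mulVec]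
  have hlow : 0 ≤ p := nonneg_of_groundedLaplacian_mulVec_nonneg hnonneg hc hg
    (by rw [hp]; exact h0)
  have hup : 0 ≤ 1 - p := nonneg_of_groundedLaplacian_mulVec_nonneg hnonneg hc hg
    (by rw [mulVec_sub, groundedLaplacian_mulVec_one, hp, add_sub_cancel_left]; exact h1)
  exact ⟨hlow i, sub_nonneg.1 (hup i)⟩
end
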